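/- A hyperfield H admits an ordering if and only if there exists a hyperfield homomorphism f : H → S to the sign hyperfield; moreover, given such a homomorphism f, the set f⁻¹(1) is an ordering on H, and conversely given an ordering H⁺ the sign map sending H⁺ to 1, H⁻ to -1, and 0 to 0 is a hyperfield homomorphism. -/
import Mathlib


/-- The data of a hyperfield: a multivalued addition, multiplication,
negation, zero and one. -/
structure HyperfieldData (H : Type*) where
  hadd : H → H → Set H
  mul : H → H → H
  neg : H → H
  zero : H
  one : H

/-- The hyperfield axioms. -/
structure IsHyperfield {H : Type*} (D : HyperfieldData H) : Prop where
  hadd_nonempty : ∀ a b, (D.hadd a b).Nonempty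
  hadd_comm : ∀ a b, D.hadd a b = D.hadd b a
  hadd_assoc : ∀ a b c, (⋃ x ∈ D.hadd a b, D.hadd x c) = ⋃ y ∈ D.hadd b c, D.hadd a y
  zero_hadd : ∀ a, D.hadd D.zero a = {a}
  neg_mem : ∀ a, D.zero ∈ D.hadd a (D.neg a)
  neg_unique : ∀ a b, D.zero ∈ D.hadd a b → b = D.neg a
  reverse : ∀ a b c, a ∈ D.hadd b c ↔ c ∈ D.hadd a (D.neg b)
  mul_comm : ∀ a b, D.mul a b = D.mul b a
  mul_assoc : ∀ a b c, D.mul (D.mul a b) c = D.mul a (D.mul b c)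
  one_mul : ∀ a, D.mul D.one a = a
  mul_inv : ∀ a, a ≠ D.zero → ∃ b, D.mul a b = D.one
  zero_mul : ∀ a, D.mul D.zero a = D.zero
  distrib : ∀ a b c, D.mul a '' D.hadd b c = D.hadd (D.mul a b) (D.mul a c)
  zero_ne_one : D.zero ≠ D.one

/-- An ordering on a hyperfield: a set of positive elements closed under
hyperaddition and multiplication such that `H = P ⊔ {0} ⊔ (-P)`. -/
def IsOrdering {H : Type*} (D : HyperfieldData H) (P : Set H) : Prop :=
  (∀ a ∈ P, ∀ b ∈ P, D.hadd a b ⊆ P) ∧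
  (∀ a ∈ P, ∀ b ∈ P, D.mul a b ∈ P) ∧
  (∀ x : H, x ∈ P ∨ x = D.zero ∨ x ∈ D.neg '' P) ∧
  D.zero ∉ P ∧ D.zero ∉ D.neg '' P ∧ Disjoint P (D.neg '' P)

/-- A hyperfield homomorphism. -/
def IsHom {H1 H2 : Type*} (D1 : HyperfieldData H1) (D2 : HyperfieldData H2)
    (f : H1 → H2) : Prop :=
  (∀ a b, f '' D1.hadd a b ⊆ D2.hadd (f a) (f b)) ∧
  (∀ a b, f (D1.mul a b) = D2.mul (f a) (f b)) ∧
  f D1.one = D2.one ∧ f D1.zero = D2.zero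

/-- The three elements of the sign hyperfield. -/
inductive SignH : Type
  | neg : SignH
  | zero : SignH
  | one : SignH
deriving DecidableEq

/-- Hyperaddition of the sign hyperfield. -/
def signAdd : SignH → SignH → Set SignH
  | .zero, a => {a}
  | a, .zero => {a}
  | .one, .one => {.one}
  | .neg, .neg => {.neg}
  | .one, .neg => Set.univ
  | .neg, .one => Set.univ

/-- Multiplication of the sign hyperfield. -/
def signMul : SignH → SignH → SignH
  | .zero, _ => .zero
  | _, .zero => .zero
  | .one, a => a
  | .neg, .one => .neg
  | .neg, .neg => .one

/-- Negation of the sign hyperfield. -/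
def signNeg : SignH → SignH
  | .zero => .zero
  | .one => .neg
  | .neg => .one

/-- The sign hyperfield `S = {-1, 0, 1}`. -/
def signHF : HyperfieldData SignH :=
  ⟨signAdd, signMul, signNeg, SignH.zero, SignH.one⟩

section Aux

variable {H : Type*} {D : HyperfieldData H}

lemma hf_mul_zero (hD : IsHyperfield D) (a : H) : D.mul a D.zero = D.zero := by
  rw [hD.mul_comm, hD.zero_mul]

lemma hf_neg_zero (hD : IsHyperfield D) : D.neg D.zero = D.zero :=
  (hD.neg_unique D.zero D.zero (by rw [hD.zero_hadd]; rfl)).symm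

lemma hf_neg_neg (hD : IsHyperfield D) (a : H) : D.neg (D.neg a) = a :=
  (hD.neg_unique (D.neg a) a (by rw [hD.hadd_comm]; exact hD.neg_mem a)).symm

lemma hf_mul_neg (hD : IsHyperfield D) (a b : H) :
    D.mul a (D.neg b) = D.neg (D.mul a b) :=
  hD.neg_unique _ _ (by
    rw [← hD.distrib]
    exact ⟨D.zero, hD.neg_mem b, hf_mul_zero hD a⟩)

lemma hf_neg_one_mul (hD : IsHyperfield D) (a : H) :
    D.mul (D.neg D.one) a = D.neg a := by
  rw [hD.mul_comm, hf_mul_neg hD, hD.mul_comm, hD.one_mul]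

lemma signAdd_zero_right (s : SignH) : signAdd s SignH.zero = {s} := by
  cases s <;> rfl

lemma signAdd_zero_left (s : SignH) : signAdd SignH.zero s = {s} := by
  cases s <;> rfl

lemma sign_neg_of_zero_mem {s t : SignH} (h : SignH.zero ∈ signAdd s t) :
    t = signNeg s := by
  cases s <;> cases t <;> simp_all [signAdd, signNeg]

lemma hf_f_neg (hD : IsHyperfield D) {f : H → SignH} (hf : IsHom D signHF f)
    (a : H) : f (D.neg a) = signNeg (f a) :=
  sign_neg_of_zero_mem (by
    have h := hf.1 a (D.neg a) ⟨D.zero, hD.neg_mem a, hf.2.2.2⟩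
    exact h)

lemma hf_eq_zero (hD : IsHyperfield D) {f : H → SignH} (hf : IsHom D signHF f)
    {x : H} (h : f x = SignH.zero) : x = D.zero := by
  by_contra hx
  obtain ⟨y, hy⟩ := hD.mul_inv x hx
  have h1 : f (D.mul x y) = SignH.one := by rw [hy]; exact hf.2.2.1
  rw [hf.2.1, h] at h1
  simp [signHF, signMul] at h1

theorem ord_of_hom {H : Type*} (D : HyperfieldData H) (hD : IsHyperfield D)
    (f : H → SignH) (hf : IsHom D signHF f) :
    IsOrdering D (f ⁻¹' {SignH.one}) := by
  have hfz : f D.zero = SignH.zero := hf.2.2.2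
  refine ⟨?_, ?_, ?_, ?_, ?_, ?_⟩
  · intro a ha b hb c hc
    have h := hf.1 a b ⟨c, hc, rfl⟩
    simp only [Set.mem_preimage, Set.mem_singleton_iff] at ha hb ⊢
    rw [ha, hb] at h
    simpa [signHF, signAdd] using h
  · intro a ha b hb
    simp only [Set.mem_preimage, Set.mem_singleton_iff] at ha hb ⊢
    rw [hf.2.1, ha, hb]; rfl
  · intro x
    rcases h : f x with _ | _ | _
    · right; right
      refine ⟨D.neg x, ?_, hf_neg_neg hD x⟩
      simp only [Set.mem_preimage, Set.mem_singleton_iff]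
      rw [hf_f_neg hD hf, h]; rfl
    · right; left; exact hf_eq_zero hD hf h
    · left; exact h
  · simp only [Set.mem_preimage, Set.mem_singleton_iff, hfz]
    exact fun h => SignH.noConfusion h
  · rintro ⟨y, hy, hye⟩
    simp only [Set.mem_preimage, Set.mem_singleton_iff] at hy
    have := hf_f_neg hD hf y
    rw [hye, hfz, hy] at this
    exact SignH.noConfusion this
  · rw [Set.disjoint_left]
    rintro x hx ⟨y, hy, rfl⟩
    simp only [Set.mem_preimage, Set.mem_singleton_iff] at hx hy
    rw [hf_f_neg hD hf, hy] at hx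
    exact SignH.noConfusion hx

theorem hom_of_ord {H : Type*} (D : HyperfieldData H) (hD : IsHyperfield D)
    (P : Set H) (hP : IsOrdering D P) (g : H → SignH)
    (hg1 : ∀ x ∈ P, g x = SignH.one)
    (hg2 : g D.zero = SignH.zero)
    (hg3 : ∀ x ∈ D.neg '' P, g x = SignH.neg) :
    IsHom D signHF g := by
  obtain ⟨hadd_cl, hmul_cl, htri, hz, hznp, hdisj⟩ := hP
  have hmz := hf_mul_zero hD
  have hnn := hf_neg_neg hD
  have hmn := hf_mul_neg hD
  have hno := hf_neg_one_mul hD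
  have hone : D.one ∈ P := by
    rcases htri D.one with h | h | ⟨p, hp, hpe⟩
    · exact h
    · exact absurd h.symm hD.zero_ne_one
    · have hsq : D.mul (D.neg p) (D.neg p) = D.mul p p := by
        rw [hmn, hD.mul_comm (D.neg p) p, hmn, hnn]
      have : D.one = D.mul p p := by
        calc D.one = D.mul D.one D.one := (hD.one_mul _).symm
        _ = D.mul (D.neg p) (D.neg p) := by rw [hpe]
        _ = D.mul p p := hsq
      rw [this]; exact hmul_cl p hp p hp
  refine ⟨?_, ?_, hg1 _ hone, hg2⟩
  · -- hadd
    intro a b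
    show g '' D.hadd a b ⊆ signAdd (g a) (g b)
    rcases htri a with ha | ha | ha
    · rcases htri b with hb | hb | hb
      · rw [hg1 a ha, hg1 b hb]
        rintro _ ⟨c, hc, rfl⟩
        have := hadd_cl a ha b hb hc
        simp [signAdd, hg1 c this]
      · subst hb
        rw [hD.hadd_comm, hD.zero_hadd, Set.image_singleton, hg2, signAdd_zero_right]
      · rw [hg1 a ha, hg3 b hb]
        exact fun x _ => Set.mem_univ x
    · subst ha
      rw [hD.zero_hadd, Set.image_singleton, hg2, signAdd_zero_left]
    · rcases htri b with hb | hb | hb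
      · rw [hg3 a ha, hg1 b hb]
        exact fun x _ => Set.mem_univ x
      · subst hb
        rw [hD.hadd_comm, hD.zero_hadd, Set.image_singleton, hg2, signAdd_zero_right]
      · obtain ⟨p, hp, rfl⟩ := ha
        obtain ⟨q, hq, rfl⟩ := hb
        have key : D.hadd (D.neg p) (D.neg q) = D.mul (D.neg D.one) '' D.hadd p q := by
          rw [hD.distrib, hno p, hno q]
        rintro _ ⟨c, hc, rfl⟩
        rw [key] at hc
        obtain ⟨w, hw, rfl⟩ := hc
        rw [hno w]
        rw [hg3 _ ⟨p, hp, rfl⟩, hg3 _ ⟨q, hq, rfl⟩,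
          hg3 _ ⟨w, hadd_cl p hp q hq hw, rfl⟩]
        rfl
  · -- mul
    intro a b
    show g (D.mul a b) = signMul (g a) (g b)
    rcases htri a with ha | ha | ha
    · rcases htri b with hb | hb | hb
      · rw [hg1 a ha, hg1 b hb, hg1 _ (hmul_cl a ha b hb)]; decide
      · subst hb; rw [hmz, hg2, hg1 a ha]; decide
      · obtain ⟨q, hq, rfl⟩ := hb
        rw [hg1 a ha, hg3 _ ⟨q, hq, rfl⟩,
          hg3 _ ⟨D.mul a q, hmul_cl a ha q hq, (hmn a q).symm⟩]
        decide
    · subst ha; rw [hD.zero_mul, hg2]; cases g b <;> decide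
    · obtain ⟨p, hp, rfl⟩ := ha
      rcases htri b with hb | hb | hb
      · have key : D.mul (D.neg p) b = D.neg (D.mul p b) := by
          rw [hD.mul_comm (D.neg p) b, hmn, hD.mul_comm b p]
        rw [key, hg3 _ ⟨p, hp, rfl⟩, hg1 b hb,
          hg3 _ ⟨D.mul p b, hmul_cl p hp b hb, rfl⟩]
        decide
      · subst hb; rw [hmz, hg2, hg3 _ ⟨p, hp, rfl⟩]; decide
      · obtain ⟨q, hq, rfl⟩ := hb
        have key : D.mul (D.neg p) (D.neg q) = D.mul p q := by
          rw [hmn, hD.mul_comm (D.neg p) q, hmn, hnn, hD.mul_comm q p]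
        rw [key, hg3 _ ⟨p, hp, rfl⟩, hg3 _ ⟨q, hq, rfl⟩,
          hg1 _ (hmul_cl p hp q hq)]
        decide

end Aux

open Classical in
/-- a hyperfield admits an ordering iff it admits a homomorphism
to the sign hyperfield; `f⁻¹(1)` is an ordering, and the sign map of an
ordering is a homomorphism. -/
theorem stmt5 {H : Type*} (D : HyperfieldData H) (hD : IsHyperfield D) :
    ((∃ P : Set H, IsOrdering D P) ↔ ∃ f : H → SignH, IsHom D signHF f) ∧
    (∀ f : H → SignH, IsHom D signHF f → IsOrdering D (f ⁻¹' {SignH.one})) ∧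
    (∀ P : Set H, IsOrdering D P →
      IsHom D signHF
        (fun x => if x ∈ P then SignH.one
          else if x = D.zero then SignH.zero else SignH.neg)) := by
  have h3 : ∀ P : Set H, IsOrdering D P →
      IsHom D signHF
        (fun x => if x ∈ P then SignH.one
          else if x = D.zero then SignH.zero else SignH.neg) := by
    intro P hP
    refine hom_of_ord D hD P hP _ ?_ ?_ ?_
    · intro x hx
      show (if x ∈ P then SignH.one
        else if x = D.zero then SignH.zero else SignH.neg) = SignH.one
      rw [if_pos hx]
    · show (if D.zero ∈ P then SignH.one
        else if D.zero = D.zero then SignH.zero else SignH.neg) = SignH.zero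
      rw [if_neg hP.2.2.2.1, if_pos rfl]
    · rintro _ ⟨y, hy, rfl⟩
      show (if D.neg y ∈ P then SignH.one
        else if D.neg y = D.zero then SignH.zero else SignH.neg) = SignH.neg
      rw [if_neg (fun h => Set.disjoint_left.mp hP.2.2.2.2.2 h ⟨y, hy, rfl⟩),
        if_neg (fun h => hP.2.2.2.2.1 (by rw [← h]; exact ⟨y, hy, rfl⟩))]
  refine ⟨⟨?_, ?_⟩, fun f hf => ord_of_hom D hD f hf, h3⟩
  · rintro ⟨P, hP⟩
    exact ⟨_, h3 P hP⟩
  · rintro ⟨f, hf⟩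
    exact ⟨_, ord_of_hom D hD f hf⟩
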